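/- arXiv:2406.14788 — 3 statements merged into one kernel-verified Lean document; each statement's English description precedes it below -/
import Mathlib

section
/- There exists a constant C > 0 such that for all x ∈ Q_ρ, all ξ ∈ ℝ, and all ε ∈ (0,1], ∫_{ℝⁿ} |φ(ξ + (d(x+εz)−d(x))/ε) − φ(ξ + ∇d(x)·z)| · |z|^{-(n+2s)} dz ≤ C. In particular the integral defining a_ε(ξ;x) converges absolutely for x ∈ Q_ρ. -/
open MeasureTheory Real Set Filter Metric
open scoped Topology RealInnerProductSpace NNReal

/-! For `‖z‖ ≤ ρ` the second-order Taylor expansion of `d` on the ball `closedBall x ρ`, which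
stays inside `Q_{2ρ}` because `d` is `1`-Lipschitz, shows that the two arguments of `φ` differ by
at most `C₂ ε ‖z‖² ≤ C₂ ‖z‖²`, so the numerator is `O(‖z‖²)` by the Lipschitz bound on `φ`; it is
also at most `1` because `φ` takes values in `(0, 1)`. The integrand is thus dominated, uniformly
in `x`, `ξ` and `ε`, by `min (A ‖z‖², 1) / ‖z‖^(n + 2s)` for a fixed `A`, which is integrable since
`2s < 2` controls the singularity at the origin and `2s > 0` the decay at infinity. -/

section Taylor

variable {E : Type*} [NormedAddCommGroup E] [InnerProductSpace ℝ E] {f : E → ℝ} {x : E}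

theorem abs_div_sub_inner_le_of_taylor {v : E} {ρ C ε : ℝ} (hC : 0 ≤ C)
    (htaylor : ∀ w, ‖w‖ ≤ ρ → |f (x + w) - f x - ⟪v, w⟫| ≤ C * ‖w‖ ^ 2)
    (hε : 0 < ε) (hε1 : ε ≤ 1) {z : E} (hz : ‖z‖ ≤ ρ) :
    |(f (x + ε • z) - f x) / ε - ⟪v, z⟫| ≤ C * ‖z‖ ^ 2 := by
  have hεz : ‖ε • z‖ = ε * ‖z‖ := by rw [norm_smul, Real.norm_of_nonneg hε.le]
  have hquot : (f (x + ε • z) - f x) / ε - ⟪v, z⟫ = (f (x + ε • z) - f x - ⟪v, ε • z⟫) / ε := by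
    rw [real_inner_smul_right]; field_simp
  rw [hquot, abs_div, abs_of_pos hε, div_le_iff₀ hε]
  calc |f (x + ε • z) - f x - ⟪v, ε • z⟫| ≤ C * ‖ε • z‖ ^ 2 :=
        htaylor _ (by rw [hεz]; nlinarith [norm_nonneg z])
    _ = C * ‖z‖ ^ 2 * ε * ε := by rw [hεz]; ring
    _ ≤ C * ‖z‖ ^ 2 * ε := by
        have : 0 ≤ C * ‖z‖ ^ 2 * ε := by positivity
        nlinarith

variable [CompleteSpace E]

theorem ContDiffAt.differentiableAt_gradient {n : WithTop ℕ∞} (hf : ContDiffAt ℝ n f x)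
    (hn : 2 ≤ n) : DifferentiableAt ℝ (gradient f) x :=
  (InnerProductSpace.toDual ℝ E).symm.toContinuousLinearEquiv.differentiableAt.comp x
    ((hf.fderiv_right (m := 1) (by rwa [one_add_one_eq_two])).differentiableAt one_ne_zero)

theorem Convex.abs_sub_sub_inner_gradient_le {s : Set E} {C : ℝ} {y : E} (hs : Convex ℝ s)
    (hf : ∀ z ∈ s, DifferentiableAt ℝ f z) (hgf : ∀ z ∈ s, DifferentiableAt ℝ (gradient f) z)
    (hC : ∀ z ∈ s, ‖fderiv ℝ (gradient f) z‖ ≤ C) (hx : x ∈ s) (hy : y ∈ s) :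
    |f y - f x - ⟪gradient f x, y - x⟫| ≤ C * ‖y - x‖ ^ 2 := by
  have hseg : segment ℝ x y ⊆ s := hs.segment_subset hx hy
  have hC₀ : 0 ≤ C := (norm_nonneg _).trans (hC x hx)
  have hfderiv : ∀ z ∈ segment ℝ x y, ‖fderiv ℝ f z - fderiv ℝ f x‖ ≤ C * ‖y - x‖ := by
    intro z hz
    rw [← toDual_gradient, ← toDual_gradient, ← map_sub, LinearIsometryEquiv.norm_map]
    calc ‖gradient f z - gradient f x‖ ≤ C * ‖z - x‖ :=
          hs.norm_image_sub_le_of_norm_fderiv_le hgf hC hx (hseg hz)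
      _ ≤ C * ‖y - x‖ := by gcongr; exact norm_sub_le_of_mem_segment hz
  have := (convex_segment x y).norm_image_sub_le_of_norm_fderiv_le'
    (fun z hz => hf z (hseg hz)) hfderiv (left_mem_segment ℝ x y) (right_mem_segment ℝ x y)
  rwa [← inner_gradient_left, Real.norm_eq_abs, mul_assoc, ← sq] at this

theorem abs_sub_sub_inner_gradient_le_of_contDiffOn {U : Set E} {C ρ : ℝ} {w : E}
    (hU : IsOpen U) (hf : ContDiffOn ℝ 2 f U) (hC : ∀ y ∈ U, ‖fderiv ℝ (gradient f) y‖ ≤ C)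
    (hball : closedBall x ρ ⊆ U) (hw : ‖w‖ ≤ ρ) :
    |f (x + w) - f x - ⟪gradient f x, w⟫| ≤ C * ‖w‖ ^ 2 := by
  have hdiff y (hy : y ∈ closedBall x ρ) : ContDiffAt ℝ 2 f y :=
    hf.contDiffAt (hU.mem_nhds (hball hy))
  simpa using (convex_closedBall x ρ).abs_sub_sub_inner_gradient_le
    (fun y hy => (hdiff y hy).differentiableAt two_ne_zero)
    (fun y hy => (hdiff y hy).differentiableAt_gradient le_rfl)
    (fun y hy => hC y (hball hy)) (mem_closedBall_self ((norm_nonneg w).trans hw))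
    (by simpa using hw : x + w ∈ closedBall x ρ)

end Taylor

theorem LipschitzWith.closedBall_subset_abs_lt_two_mul {X : Type*} [PseudoMetricSpace X]
    {f : X → ℝ} (hf : LipschitzWith 1 f) {x : X} {ρ : ℝ} (hx : |f x| < ρ) :
    closedBall x ρ ⊆ {y | |f y| < 2 * ρ} := fun y hy => by
  have hdist : |f y - f x| ≤ dist y x := by
    simpa [Real.dist_eq] using hf.dist_le_mul y x
  have := abs_sub_abs_le_abs_sub (f y) (f x)
  rw [mem_closedBall] at hy
  rw [mem_ofPred_eq]
  linarith

theorem abs_sub_le_min_mul_sq_one {φ : ℝ → ℝ} {K : ℝ≥0} (hφ : LipschitzWith K φ)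
    (hφ01 : ∀ t, φ t ∈ Ioo 0 1) {ρ C r a b : ℝ} (hρ : 0 < ρ)
    (hab : r ≤ ρ → |a - b| ≤ C * r ^ 2) :
    |φ a - φ b| ≤ min (max (K * C) (ρ ^ 2)⁻¹ * r ^ 2) 1 := by
  have hle_one : |φ a - φ b| ≤ 1 := by
    simpa [Real.dist_eq] using
      Real.dist_le_of_mem_Icc_01 (Ioo_subset_Icc_self (hφ01 a)) (Ioo_subset_Icc_self (hφ01 b))
  refine le_min ?_ hle_one
  rcases le_or_gt r ρ with hr | hr
  · calc |φ a - φ b| ≤ K * |a - b| := by simpa [Real.dist_eq] using hφ.dist_le_mul a b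
      _ ≤ K * (C * r ^ 2) := by gcongr; exact hab hr
      _ = K * C * r ^ 2 := by ring
      _ ≤ max (K * C) (ρ ^ 2)⁻¹ * r ^ 2 := by gcongr; exact le_max_left _ _
  · calc |φ a - φ b| ≤ 1 := hle_one
      _ ≤ (ρ ^ 2)⁻¹ * r ^ 2 := by
          rw [inv_mul_eq_div, one_le_div (by positivity)]
          gcongr
      _ ≤ max (K * C) (ρ ^ 2)⁻¹ * r ^ 2 := by gcongr; exact le_max_right _ _

section LevyKernel

variable {E : Type*} [NormedAddCommGroup E] [NormedSpace ℝ E] [FiniteDimensional ℝ E]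
  [MeasurableSpace E] [BorelSpace E] (μ : Measure E) [μ.IsAddHaarMeasure]

open Module

theorem integrableOn_compl_ball_rpow_neg {p : ℝ} (hp : finrank ℝ E < p) :
    IntegrableOn (fun x : E => ‖x‖ ^ (-p)) (ball 0 1)ᶜ μ := by
  have hp₀ : 0 < p := (Nat.cast_nonneg _).trans_lt hp
  refine ((integrable_one_add_norm (μ := μ) hp).const_mul (2 ^ p)).integrableOn.mono'
    (Measurable.aestronglyMeasurable (by fun_prop))
    ((ae_restrict_iff' measurableSet_ball.compl).2 (ae_of_all _ fun x hx => ?_))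
  have hx : 1 ≤ ‖x‖ := by simpa using hx
  rw [Real.norm_of_nonneg (by positivity)]
  calc ‖x‖ ^ (-p) = 2 ^ p * (2 * ‖x‖) ^ (-p) := by
        rw [mul_rpow zero_le_two (by positivity), ← mul_assoc, ← rpow_add zero_lt_two,
          add_neg_cancel, rpow_zero, one_mul]
    _ ≤ 2 ^ p * (1 + ‖x‖) ^ (-p) :=
        mul_le_mul_of_nonneg_left (rpow_le_rpow_of_nonpos (by positivity) (by linarith)
          (by linarith)) (by positivity)

theorem integrable_min_mul_sq_one_div_rpow (hE : 1 ≤ finrank ℝ E) {s A : ℝ} (hs0 : 0 < s)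
    (hs1 : s < 1) (hA : 0 ≤ A) :
    Integrable (fun x : E => min (A * ‖x‖ ^ 2) 1 / ‖x‖ ^ ((finrank ℝ E : ℝ) + 2 * s)) μ := by
  set p : ℝ := finrank ℝ E + 2 * s
  have hmeas : AEStronglyMeasurable (fun x : E => min (A * ‖x‖ ^ 2) 1 / ‖x‖ ^ p) μ :=
    (Measurable.div (by fun_prop) (by fun_prop)).aestronglyMeasurable
  rw [← integrableOn_univ, ← union_compl_self (ball (0 : E) 1)]
  refine .union ?_ ?_
  · refine integrableOn_ball_of_norm_le_rpow hE (C := A) (α := p - 2) (by linarith)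
      (ae_of_all _ fun x => ?_) hmeas
    rcases eq_or_ne x 0 with rfl | hx
    · simpa using mul_nonneg hA (rpow_nonneg le_rfl _)
    have hx₀ : 0 < ‖x‖ := norm_pos_iff.2 hx
    rw [Real.norm_of_nonneg (by positivity), div_le_iff₀ (by positivity)]
    calc min (A * ‖x‖ ^ 2) 1 ≤ A * ‖x‖ ^ 2 := min_le_left _ _
      _ = A * ‖x‖ ^ (-(p - 2)) * ‖x‖ ^ p := by
          rw [mul_assoc, ← rpow_add hx₀, neg_sub, sub_add_cancel, rpow_two]
  · refine (integrableOn_compl_ball_rpow_neg μ (p := p) (by linarith)).mono' hmeas.restrict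
      ((ae_restrict_iff' measurableSet_ball.compl).2 (ae_of_all _ fun x _ => ?_))
    rw [Real.norm_of_nonneg (by positivity), rpow_neg (norm_nonneg x), div_eq_mul_inv]
    exact mul_le_of_le_one_left (by positivity) (min_le_right _ _)

end LevyKernel

theorem aeps_integrand_absolutely_integrable_general
    (n : ℕ) (hn : 2 ≤ n) (s : ℝ) (hs : s ∈ Set.Ioo (0 : ℝ) 1)
    (d : EuclideanSpace ℝ (Fin n) → ℝ)
    (hdLip : LipschitzWith 1 d)
    (ρ : ℝ) (hρ : 0 < ρ)
    (hsmooth : ContDiffOn ℝ (⊤ : ℕ∞) d {x : EuclideanSpace ℝ (Fin n) | |d x| < 2 * ρ})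
    (C₂ : ℝ) (hhess : ∀ x ∈ {x : EuclideanSpace ℝ (Fin n) | |d x| < 2 * ρ},
      ‖fderiv ℝ (gradient d) x‖ ≤ C₂)
    (φ : ℝ → ℝ) (hφmem : ∀ ξ : ℝ, φ ξ ∈ Set.Ioo (0 : ℝ) 1)
    (K : ℝ≥0) (hφLip : LipschitzWith K φ) :
    ∃ C : ℝ, 0 < C ∧ ∀ x ∈ {x : EuclideanSpace ℝ (Fin n) | |d x| < ρ},
      ∀ ξ : ℝ, ∀ ε : ℝ, 0 < ε → ε ≤ 1 →
        (Integrable (fun z : EuclideanSpace ℝ (Fin n) =>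
          (φ (ξ + (d (x + ε • z) - d x) / ε) - φ (ξ + ⟪gradient d x, z⟫))
            / ‖z‖ ^ ((n : ℝ) + 2*s))) ∧
        (∫ z : EuclideanSpace ℝ (Fin n),
          |φ (ξ + (d (x + ε • z) - d x) / ε) - φ (ξ + ⟪gradient d x, z⟫)|
            / ‖z‖ ^ ((n : ℝ) + 2*s)) ≤ C := by
  obtain ⟨hs0, hs1⟩ := hs
  set A := max (K * C₂) (ρ ^ 2)⁻¹
  have hA : 0 ≤ A := le_max_of_le_right (by positivity)
  have hM : Integrable fun z : EuclideanSpace ℝ (Fin n) =>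
      min (A * ‖z‖ ^ 2) 1 / ‖z‖ ^ ((n : ℝ) + 2 * s) := by
    have := integrable_min_mul_sq_one_div_rpow (volume : Measure (EuclideanSpace ℝ (Fin n)))
      (by simp; omega) hs0 hs1 hA
    rwa [finrank_euclideanSpace_fin] at this
  obtain ⟨I, hI⟩ : ∃ I, I = ∫ z : EuclideanSpace ℝ (Fin n),
      min (A * ‖z‖ ^ 2) 1 / ‖z‖ ^ ((n : ℝ) + 2 * s) := ⟨_, rfl⟩
  have hI₀ : 0 ≤ I := hI ▸ integral_nonneg fun z =>
    div_nonneg (le_min (mul_nonneg hA (sq_nonneg _)) zero_le_one) (by positivity)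
  refine ⟨I + 1, by linarith, fun x hx ξ ε hε hε1 => ?_⟩
  have hball := hdLip.closedBall_subset_abs_lt_two_mul hx
  have hC₂ : 0 ≤ C₂ := (norm_nonneg _).trans (hhess x (hball (mem_closedBall_self hρ.le)))
  have htaylor w (hw : ‖w‖ ≤ ρ) := abs_sub_sub_inner_gradient_le_of_contDiffOn
    (isOpen_lt hdLip.continuous.abs continuous_const) (hsmooth.of_le (by norm_cast)) hhess hball hw
  set u := fun z => φ (ξ + (d (x + ε • z) - d x) / ε) - φ (ξ + ⟪gradient d x, z⟫)
  have hbound z : |u z| / ‖z‖ ^ ((n : ℝ) + 2 * s) ≤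
      min (A * ‖z‖ ^ 2) 1 / ‖z‖ ^ ((n : ℝ) + 2 * s) := by
    refine div_le_div_of_nonneg_right (abs_sub_le_min_mul_sq_one hφLip hφmem hρ fun hz => ?_)
      (by positivity)
    rw [add_sub_add_left_eq_sub]
    exact abs_div_sub_inner_le_of_taylor hC₂ htaylor hε hε1 hz
  have hu : Continuous u := by
    have := hφLip.continuous; have := hdLip.continuous; fun_prop
  refine ⟨hM.mono' (hu.measurable.div (by fun_prop)).aestronglyMeasurable
    (ae_of_all _ fun z => ?_), ?_⟩
  · rw [Real.norm_eq_abs, abs_div, abs_of_nonneg (rpow_nonneg (norm_nonneg z) _)]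
    exact hbound z
  calc ∫ z, |u z| / ‖z‖ ^ ((n : ℝ) + 2 * s)
      ≤ I := hI ▸ integral_mono_of_nonneg (ae_of_all _ fun z => by positivity) hM
        (ae_of_all _ hbound)
    _ ≤ I + 1 := le_add_of_nonneg_right zero_le_one

/-- **Absolute convergence of the integral defining `a_ε`.** There is `C > 0` such that
for all `x ∈ Q_ρ`, `ξ ∈ ℝ` and `ε ∈ (0,1]`, the integrand of `a_ε(ξ;x)` is integrable
and `∫_{ℝⁿ} |φ(ξ + (d(x+εz)−d(x))/ε) − φ(ξ + ∇d(x)·z)|·|z|^{-(n+2s)} dz ≤ C`. -/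
theorem aeps_integrand_absolutely_integrable
    (n : ℕ) (hn : 2 ≤ n) (s : ℝ) (hs : s ∈ Set.Ioo (0 : ℝ) 1)
    (Ω : Set (EuclideanSpace ℝ (Fin n))) (hΩopen : IsOpen Ω) (hΩconn : IsConnected Ω)
    (d : EuclideanSpace ℝ (Fin n) → ℝ)
    (hd : ∀ x : EuclideanSpace ℝ (Fin n),
      (x ∈ Ω → d x = Metric.infDist x (frontier Ω)) ∧
      (x ∉ Ω → d x = -Metric.infDist x (frontier Ω)))
    (hdLip : LipschitzWith 1 d)
    (ρ : ℝ) (hρ : 0 < ρ)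
    (hsmooth : ContDiffOn ℝ (⊤ : ℕ∞) d {x : EuclideanSpace ℝ (Fin n) | |d x| < 2 * ρ})
    (hgrad : ∀ x ∈ {x : EuclideanSpace ℝ (Fin n) | |d x| < 2 * ρ}, ‖gradient d x‖ = 1)
    (C₂ : ℝ) (hhess : ∀ x ∈ {x : EuclideanSpace ℝ (Fin n) | |d x| < 2 * ρ},
      ‖fderiv ℝ (gradient d) x‖ ≤ C₂)
    (φ : ℝ → ℝ) (hφmem : ∀ ξ : ℝ, φ ξ ∈ Set.Ioo (0 : ℝ) 1)
    (K : ℝ≥0) (hφLip : LipschitzWith K φ) :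
    ∃ C : ℝ, 0 < C ∧ ∀ x ∈ {x : EuclideanSpace ℝ (Fin n) | |d x| < ρ},
      ∀ ξ : ℝ, ∀ ε : ℝ, 0 < ε → ε ≤ 1 →
        (Integrable (fun z : EuclideanSpace ℝ (Fin n) =>
          (φ (ξ + (d (x + ε • z) - d x) / ε) - φ (ξ + ⟪gradient d x, z⟫))
            / ‖z‖ ^ ((n : ℝ) + 2*s))) ∧
        (∫ z : EuclideanSpace ℝ (Fin n),
          |φ (ξ + (d (x + ε • z) - d x) / ε) - φ (ξ + ⟪gradient d x, z⟫)|
            / ‖z‖ ^ ((n : ℝ) + 2*s)) ≤ C :=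
  aeps_integrand_absolutely_integrable_general n hn s hs d hdLip ρ hρ hsmooth C₂ hhess φ hφmem K
    hφLip
end

section
/- Let n ≥ 2 and s ∈ (0,1/2). There exist τ₀ > 0 and R > 0 such that for all 0 < τ ≤ τ₀, all 0 ≤ σ < τ/2, and all x ∈ Q_ρ: ∫_{{z : d(x+z) > d(x)−σ and −τ < ∇d(x)·z < −2σ}} |z|^{-(n+2s)} dz ≤ ∫_{{y=(y',y_n) : |y_n| < τ and |y_n| < R|y'|²}} |y|^{-(n+2s)} dy, and ∫_{{z : d(x+z) < d(x)+σ and 2σ < ∇d(x)·z < τ}} |z|^{-(n+2s)} dz ≤ ∫_{{y=(y',y_n) : |y_n| < τ and |y_n| < R|y'|²}} |y|^{-(n+2s)} dy. -/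
/-!
Write `g = ∇d(x)`, a unit vector, and `t = ⟪g, z⟫`. For `z` in the first region the Taylor bound
gives `-σ - t < C₀‖z‖²` with `σ < |t|/2`, hence `|t| < 2C₀‖z‖²`; and `|t| < τ ≤ 1/(4C₀)` gives
`4C₀t² ≤ |t|`. Together, `|t| < 4C₀(‖z‖² - t²)`: the region lies in the cuspidal slab
`{|t| < τ, |t| < R(‖z‖² - t²)}` around `g` with `R = 4C₀`. The second region is the first one
for `-g`. A reflection carrying `g` to `eₙ` maps this slab onto the one in the statement.

It remains to see that `‖z‖^(-p)`, `p = n + 2s`, is integrable on the slab. Splitting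
`z = v + w` with `v ∈ ℝg` and `w ⊥ g`, the slab is `{‖v‖ < min τ (R‖w‖²)}` and `‖z‖ ≥ ‖w‖`, so
the integral is at most a constant times `∫ ‖w‖^(-p) min τ (R‖w‖²) dw` over `gᗮ ≅ ℝⁿ⁻¹`. In
polar coordinates this converges at `0` iff `p < n + 1` and at infinity iff `p > n - 1`;
the first condition is `s < 1/2`.
-/

open MeasureTheory Real Set Filter Metric Module
open scoped Topology RealInnerProductSpace ENNReal

theorem integrable_norm_rpow_neg_mul_min {E : Type*} [NormedAddCommGroup E] [NormedSpace ℝ E]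
    [FiniteDimensional ℝ E] [MeasurableSpace E] [BorelSpace E] [Nontrivial E]
    (μ : Measure E) [μ.IsAddHaarMeasure] {p τ R : ℝ} (hp : (finrank ℝ E : ℝ) < p)
    (hp' : p < finrank ℝ E + 2) (hτ : 0 ≤ τ) (hR : 0 ≤ R) :
    Integrable (fun w => ‖w‖ ^ (-p) * min τ (R * ‖w‖ ^ 2)) μ := by
  rw [integrable_fun_norm_addHaar μ (f := fun y => y ^ (-p) * min τ (R * y ^ 2)),
    ← Ioc_union_Ioi_eq_Ioi zero_le_one]
  have hk : ((finrank ℝ E - 1 : ℕ) : ℝ) = finrank ℝ E - 1 := by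
    rw [Nat.cast_sub Module.finrank_pos, Nat.cast_one]
  have hmeas : Measurable fun y : ℝ => y ^ (finrank ℝ E - 1) • (y ^ (-p) * min τ (R * y ^ 2)) := by
    fun_prop
  have hform : ∀ y : ℝ, 0 < y → ‖y ^ (finrank ℝ E - 1) • (y ^ (-p) * min τ (R * y ^ 2))‖ =
      y ^ ((finrank ℝ E : ℝ) - 1 - p) * min τ (R * y ^ 2) := by
    intro y hy
    rw [smul_eq_mul, ← mul_assoc, ← rpow_natCast, ← rpow_add hy, hk, ← sub_eq_add_neg,
      Real.norm_of_nonneg (by positivity)]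
  refine IntegrableOn.union ?_ ?_
  · have hint : IntegrableOn (fun y : ℝ => R * y ^ ((finrank ℝ E : ℝ) + 1 - p)) (Ioc 0 1) := by
      refine Integrable.const_mul ?_ R
      exact (intervalIntegrable_iff_integrableOn_Ioc_of_le zero_le_one).1
        (intervalIntegral.intervalIntegrable_rpow' (by linarith))
    refine hint.mono' hmeas.aestronglyMeasurable (ae_restrict_of_forall_mem measurableSet_Ioc ?_)
    rintro y ⟨hy, -⟩
    rw [hform y hy]
    calc y ^ ((finrank ℝ E : ℝ) - 1 - p) * min τ (R * y ^ 2)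
        ≤ y ^ ((finrank ℝ E : ℝ) - 1 - p) * (R * y ^ 2) := by gcongr; exact min_le_right _ _
      _ = R * y ^ ((finrank ℝ E : ℝ) + 1 - p) := by
        rw [← rpow_natCast, mul_left_comm, ← rpow_add hy]; ring_nf
  · have hint : IntegrableOn (fun y : ℝ => τ * y ^ ((finrank ℝ E : ℝ) - 1 - p)) (Ioi 1) :=
      (integrableOn_Ioi_rpow_of_lt (by linarith) zero_lt_one).const_mul τ
    refine hint.mono' hmeas.aestronglyMeasurable (ae_restrict_of_forall_mem measurableSet_Ioi ?_)
    intro y hy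
    rw [hform y (zero_lt_one.trans hy), mul_comm τ]
    exact mul_le_mul_of_nonneg_left (min_le_left _ _) (rpow_nonneg (zero_le_one.trans hy.le) _)

section CuspidalSlab

variable {E : Type*} [NormedAddCommGroup E] [InnerProductSpace ℝ E]

/-- For `‖g‖ = 1`, `‖z‖ ^ 2 - ⟪g, z⟫ ^ 2` is the squared length of the component of `z`
orthogonal to `g`, so for `g` the last basis vector of `EuclideanSpace ℝ (Fin n)` this is the region
`{|yₙ| < τ, |yₙ| < R|y'|²}`. -/
def cuspidalSlab (g : E) (τ R : ℝ) : Set E :=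
  {z | |⟪g, z⟫| < τ ∧ |⟪g, z⟫| < R * (‖z‖ ^ 2 - ⟪g, z⟫ ^ 2)}

@[simp]
lemma cuspidalSlab_neg (g : E) (τ R : ℝ) : cuspidalSlab (-g) τ R = cuspidalSlab g τ R := by
  simp [cuspidalSlab, inner_neg_left]

lemma preimage_cuspidalSlab {F : Type*} [NormedAddCommGroup F] [InnerProductSpace ℝ F]
    (e : E ≃ₗᵢ[ℝ] F) (g : E) (τ R : ℝ) :
    e ⁻¹' cuspidalSlab (e g) τ R = cuspidalSlab g τ R := by
  ext z
  simp [cuspidalSlab, LinearIsometryEquiv.inner_map_map]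

lemma mem_cuspidalSlab_of_taylor {g z : E} {δ σ τ C : ℝ} (hC : 0 < C) (hτ : τ ≤ (4 * C)⁻¹)
    (hσ : 0 ≤ σ) (hδ : -σ < δ) (hlo : -τ < ⟪g, z⟫) (hhi : ⟪g, z⟫ < -(2 * σ))
    (hT : |δ - ⟪g, z⟫| ≤ C * ‖z‖ ^ 2) : z ∈ cuspidalSlab g τ (4 * C) := by
  set t := ⟪g, z⟫
  have ht : |t| = -t := abs_of_neg (by linarith)
  have hlin : -t < 2 * C * ‖z‖ ^ 2 := by linarith [(abs_le.1 hT).2]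
  have hquad : 4 * C * t ^ 2 ≤ -t := by
    have h4 : 4 * C * τ ≤ 1 :=
      (mul_le_mul_of_nonneg_left hτ (by positivity)).trans_eq (mul_inv_cancel₀ (by positivity))
    nlinarith
  exact ⟨by rw [ht]; linarith, by rw [ht]; nlinarith⟩

lemma add_mem_cuspidalSlab_iff {g v w : E} {τ R : ℝ} (hg : ‖g‖ = 1) (hv : v ∈ ℝ ∙ g)
    (hw : w ∈ (ℝ ∙ g)ᗮ) : v + w ∈ cuspidalSlab g τ R ↔ ‖v‖ < τ ∧ ‖v‖ < R * ‖w‖ ^ 2 := by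
  obtain ⟨c, rfl⟩ := Submodule.mem_span_singleton.1 hv
  have hgw : ⟪g, w⟫ = 0 :=
    Submodule.inner_right_of_mem_orthogonal (Submodule.mem_span_singleton_self g) hw
  have hinner : ⟪g, c • g + w⟫ = c := by
    rw [inner_add_right, inner_smul_right, real_inner_self_eq_norm_sq, hg, hgw]; ring
  have hnorm : ‖c • g + w‖ ^ 2 = c ^ 2 + ‖w‖ ^ 2 := by
    rw [norm_add_sq_real, real_inner_smul_left, hgw, norm_smul, hg, Real.norm_eq_abs, mul_one,
      sq_abs]
    ring
  simp only [cuspidalSlab, mem_ofPred_eq, hinner, hnorm, norm_smul, hg, Real.norm_eq_abs, mul_one]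
  ring_nf

lemma isOpen_cuspidalSlab (g : E) (τ R : ℝ) : IsOpen (cuspidalSlab g τ R) := by
  have h : Continuous fun z : E => |⟪g, z⟫| := by fun_prop
  exact (isOpen_lt h continuous_const).inter (isOpen_lt h (by fun_prop))

lemma norm_le_norm_add_of_mem_orthogonal {K : Submodule ℝ E} {v w : E} (hv : v ∈ K)
    (hw : w ∈ Kᗮ) : ‖w‖ ≤ ‖v + w‖ := by
  refine (sq_le_sq₀ (norm_nonneg _) (norm_nonneg _)).1 ?_
  rw [norm_add_sq_real, Submodule.inner_right_of_mem_orthogonal hv hw]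
  nlinarith [sq_nonneg ‖v‖]

lemma norm_add_rpow_neg_le_of_mem_cuspidalSlab {g v w : E} {τ R p : ℝ} (hg : ‖g‖ = 1)
    (hv : v ∈ ℝ ∙ g) (hw : w ∈ (ℝ ∙ g)ᗮ) (hp : 0 ≤ p) (hvw : v + w ∈ cuspidalSlab g τ R) :
    ‖v + w‖ ^ (-p) ≤ ‖w‖ ^ (-p) := by
  have hR := ((add_mem_cuspidalSlab_iff hg hv hw).1 hvw).2
  have hw0 : 0 < ‖w‖ := norm_pos_iff.2 fun h => by
    simp only [h, norm_zero] at hR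
    nlinarith [norm_nonneg v]
  exact rpow_le_rpow_of_nonpos hw0 (norm_le_norm_add_of_mem_orthogonal hv hw) (neg_nonpos.2 hp)

variable [FiniteDimensional ℝ E] [MeasurableSpace E] [BorelSpace E]

lemma lintegral_eq_lintegral_prod_orthogonal (K : Submodule ℝ E) (f : E → ℝ≥0∞) :
    ∫⁻ z, f z = ∫⁻ q : K × Kᗮ, f (q.1 + q.2) := by
  have hΦ := K.measurePreserving_measurableEquivProd (0 : E)
  rw [InnerProductSpace.euclideanHausdorffMeasure_eq_volume] at hΦ
  rw [← hΦ.symm.lintegral_comp_emb (K.measurableEquivProd (0 : E)).symm.measurableEmbedding]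
  simp

lemma lintegral_cuspidalSlab_le {g : E} (hg : ‖g‖ = 1) {p τ R : ℝ} (hp : 0 ≤ p) (hτ : 0 ≤ τ)
    (hR : 0 ≤ R) :
    ∫⁻ z in cuspidalSlab g τ R, ENNReal.ofReal (‖z‖ ^ (-p)) ≤
      (∫⁻ w : (ℝ ∙ g)ᗮ, ENNReal.ofReal (‖w‖ ^ (-p) * min τ (R * ‖w‖ ^ 2))) *
        volume (ball (0 : ℝ ∙ g) 1) := by
  set K : Submodule ℝ E := ℝ ∙ g
  have hK : finrank ℝ K = 1 := finrank_span_singleton (norm_ne_zero_iff.1 (by simp [hg]))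
  have : Nontrivial K := nontrivial_of_finrank_pos (by rw [hK]; exact one_pos)
  set F : E → ℝ≥0∞ := (cuspidalSlab g τ R).indicator fun z => ENNReal.ofReal (‖z‖ ^ (-p))
  set r : Kᗮ → ℝ := fun w => min τ (R * ‖w‖ ^ 2)
  set G : K × Kᗮ → ℝ≥0∞ := {q | ‖q.1‖ < r q.2}.indicator fun q => ENNReal.ofReal (‖q.2‖ ^ (-p))
  have hG : Measurable G := (Measurable.ennreal_ofReal (by fun_prop)).indicator
    (measurableSet_lt (by fun_prop) (by fun_prop))
  have hFG : ∀ q : K × Kᗮ, F (q.1 + q.2) ≤ G q := by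
    rintro ⟨⟨v, hv⟩, ⟨w, hw⟩⟩
    by_cases hvw : v + w ∈ cuspidalSlab g τ R
    · have hq : ((⟨v, hv⟩, ⟨w, hw⟩) : K × Kᗮ) ∈ {q : K × Kᗮ | ‖q.1‖ < r q.2} :=
        lt_min_iff.2 ((add_mem_cuspidalSlab_iff hg hv hw).1 hvw)
      simp only [F, G, indicator_of_mem hvw, indicator_of_mem hq]
      exact ENNReal.ofReal_le_ofReal (norm_add_rpow_neg_le_of_mem_cuspidalSlab hg hv hw hp hvw)
    · simp [F, indicator_of_notMem hvw]
  have hslice : ∀ w : Kᗮ, ∫⁻ v, G (v, w) =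
      ENNReal.ofReal (‖w‖ ^ (-p) * r w) * volume (ball (0 : K) 1) := by
    intro w
    have hr : 0 ≤ r w := le_min hτ (by positivity)
    calc ∫⁻ v, G (v, w)
        = ∫⁻ v, (ball (0 : K) (r w)).indicator (fun _ => ENNReal.ofReal (‖w‖ ^ (-p))) v := by
          simp only [G, indicator, mem_ball_zero_iff, mem_ofPred_eq]
      _ = _ := by
        rw [lintegral_indicator_const measurableSet_ball, Measure.addHaar_ball _ _ hr, hK, pow_one,
          ← mul_assoc, ← ENNReal.ofReal_mul (by positivity)]
  calc ∫⁻ z in cuspidalSlab g τ R, ENNReal.ofReal (‖z‖ ^ (-p))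
      = ∫⁻ z, F z := (lintegral_indicator (isOpen_cuspidalSlab g τ R).measurableSet _).symm
    _ = ∫⁻ q : K × Kᗮ, F (q.1 + q.2) := lintegral_eq_lintegral_prod_orthogonal K F
    _ ≤ ∫⁻ q, G q := lintegral_mono hFG
    _ = ∫⁻ w, ∫⁻ v, G (v, w) := lintegral_prod_symm _ hG.aemeasurable
    _ = _ := by simp_rw [hslice]; exact lintegral_mul_const _ (by fun_prop)

theorem integrableOn_cuspidalSlab {g : E} (hg : ‖g‖ = 1) (hE : 2 ≤ finrank ℝ E) {p τ R : ℝ}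
    (hp : (finrank ℝ E : ℝ) - 1 < p) (hp' : p < finrank ℝ E + 1) (hτ : 0 ≤ τ) (hR : 0 ≤ R) :
    IntegrableOn (fun z => ‖z‖ ^ (-p)) (cuspidalSlab g τ R) := by
  have hE' : (2 : ℝ) ≤ finrank ℝ E := by exact_mod_cast hE
  have hK : finrank ℝ (ℝ ∙ g)ᗮ = finrank ℝ E - 1 := by
    have := (ℝ ∙ g).finrank_add_finrank_orthogonal
    rw [finrank_span_singleton (norm_ne_zero_iff.1 (by simp [hg]))] at this
    omega
  have hK' : (finrank ℝ (ℝ ∙ g)ᗮ : ℝ) = finrank ℝ E - 1 := by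
    rw [hK, Nat.cast_sub (by omega), Nat.cast_one]
  have : Nontrivial (ℝ ∙ g)ᗮ := nontrivial_of_finrank_pos (by rw [hK]; omega)
  refine ⟨Measurable.aestronglyMeasurable (by fun_prop), (hasFiniteIntegral_iff_ofReal
    (ae_of_all _ fun z => rpow_nonneg (norm_nonneg z) _)).2 ?_⟩
  refine (lintegral_cuspidalSlab_le hg (by linarith) hτ hR).trans_lt
    (ENNReal.mul_lt_top (Integrable.lintegral_lt_top ?_) measure_ball_lt_top)
  exact integrable_norm_rpow_neg_mul_min volume (by linarith) (by linarith) hτ hR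

lemma setIntegral_cuspidalSlab_eq {g g' : E} (hg : ‖g‖ = ‖g'‖) (f : ℝ → ℝ) (τ R : ℝ) :
    ∫ z in cuspidalSlab g τ R, f ‖z‖ = ∫ z in cuspidalSlab g' τ R, f ‖z‖ := by
  set e := (ℝ ∙ (g - g'))ᗮ.reflection
  have he : e g = g' := Submodule.reflection_sub hg
  calc ∫ z in cuspidalSlab g τ R, f ‖z‖ = ∫ z in e ⁻¹' cuspidalSlab (e g) τ R, f ‖e z‖ := by
        simp only [preimage_cuspidalSlab, LinearIsometryEquiv.norm_map]
    _ = ∫ z in cuspidalSlab g' τ R, f ‖z‖ := by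
      rw [e.measurePreserving.setIntegral_preimage_emb e.toHomeomorph.measurableEmbedding
        (fun y => f ‖y‖), he]

theorem setIntegral_norm_rpow_neg_le_of_subset_cuspidalSlab {A : Set E} {g g' : E}
    (hg : ‖g‖ = 1) (hg' : ‖g'‖ = 1) (hE : 2 ≤ finrank ℝ E) {p τ R : ℝ}
    (hp : (finrank ℝ E : ℝ) - 1 < p) (hp' : p < finrank ℝ E + 1) (hτ : 0 ≤ τ) (hR : 0 ≤ R)
    (hA : A ⊆ cuspidalSlab g τ R) :
    ∫ z in A, ‖z‖ ^ (-p) ≤ ∫ z in cuspidalSlab g' τ R, ‖z‖ ^ (-p) :=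
  (setIntegral_mono_set (integrableOn_cuspidalSlab hg hE hp hp' hτ hR)
    (ae_of_all _ fun z => rpow_nonneg (norm_nonneg z) _) hA.eventuallyLE).trans_eq
    (setIntegral_cuspidalSlab_eq (hg.trans hg'.symm) (fun r => r ^ (-p)) τ R)

end CuspidalSlab

/-- **Lemma.** For `n ≥ 2` and `s ∈ (0,1/2)` there exist `τ₀, R > 0` such that for all
`0 < τ ≤ τ₀`, `0 ≤ σ < τ/2` and `x ∈ Q_ρ`, the kernel integrals over
`{z : d(x+z) > d(x)−σ, −τ < ∇d(x)·z < −2σ}` and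
`{z : d(x+z) < d(x)+σ, 2σ < ∇d(x)·z < τ}` are bounded by
`∫_{{|y_n| < τ, |y_n| < R|y'|²}} |y|^{-(n+2s)} dy` (with `|y'|² = |y|² − y_n²`). -/
theorem kernel_integral_near_interface_bound
    (n : ℕ) (hn : 2 ≤ n) (s : ℝ) (hs : s ∈ Set.Ioo (0 : ℝ) (1/2))
    (d : EuclideanSpace ℝ (Fin n) → ℝ)
    (ρ : ℝ)
    (hgrad : ∀ x ∈ {x : EuclideanSpace ℝ (Fin n) | |d x| < 2 * ρ}, ‖gradient d x‖ = 1)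
    (C₀ : ℝ) (hC₀ : 0 < C₀)
    (hTaylor : ∀ x ∈ {x : EuclideanSpace ℝ (Fin n) | |d x| < ρ},
      ∀ z : EuclideanSpace ℝ (Fin n),
        |d (x + z) - d x - ⟪gradient d x, z⟫| ≤ C₀ * ‖z‖^2) :
    ∃ τ₀ : ℝ, 0 < τ₀ ∧ ∃ R : ℝ, 0 < R ∧
      ∀ τ σ : ℝ, 0 < τ → τ ≤ τ₀ → 0 ≤ σ → σ < τ/2 →
      ∀ x ∈ {x : EuclideanSpace ℝ (Fin n) | |d x| < ρ},
        (∫ z in {z : EuclideanSpace ℝ (Fin n) |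
            d x - σ < d (x + z) ∧ -τ < ⟪gradient d x, z⟫ ∧ ⟪gradient d x, z⟫ < -(2*σ)},
          ‖z‖ ^ (-((n : ℝ) + 2*s)))
          ≤ (∫ y in {y : EuclideanSpace ℝ (Fin n) |
              |y ⟨n - 1, by omega⟩| < τ ∧
              |y ⟨n - 1, by omega⟩| < R * (‖y‖^2 - (y ⟨n - 1, by omega⟩)^2)},
            ‖y‖ ^ (-((n : ℝ) + 2*s))) ∧
        (∫ z in {z : EuclideanSpace ℝ (Fin n) |
            d (x + z) < d x + σ ∧ 2*σ < ⟪gradient d x, z⟫ ∧ ⟪gradient d x, z⟫ < τ},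
          ‖z‖ ^ (-((n : ℝ) + 2*s)))
          ≤ (∫ y in {y : EuclideanSpace ℝ (Fin n) |
              |y ⟨n - 1, by omega⟩| < τ ∧
              |y ⟨n - 1, by omega⟩| < R * (‖y‖^2 - (y ⟨n - 1, by omega⟩)^2)},
            ‖y‖ ^ (-((n : ℝ) + 2*s))) := by
  refine ⟨(4 * C₀)⁻¹, by positivity, 4 * C₀, by positivity, ?_⟩
  intro τ σ hτ hτ₀ hσ _ x hx
  set e := EuclideanSpace.single (⟨n - 1, by omega⟩ : Fin n) (1 : ℝ)
  have hslab : {y : EuclideanSpace ℝ (Fin n) | |y ⟨n - 1, by omega⟩| < τ ∧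
      |y ⟨n - 1, by omega⟩| < 4 * C₀ * (‖y‖^2 - (y ⟨n - 1, by omega⟩)^2)} =
      cuspidalSlab e τ (4 * C₀) := by
    ext y
    simp [cuspidalSlab, e, EuclideanSpace.inner_single_left]
  have hg : ‖gradient d x‖ = 1 :=
    hgrad x (show |d x| < 2 * ρ by linarith [abs_nonneg (d x), show |d x| < ρ from hx])
  have hbound : ∀ A ⊆ cuspidalSlab (gradient d x) τ (4 * C₀),
      ∫ z in A, ‖z‖ ^ (-((n : ℝ) + 2 * s)) ≤
        ∫ y in cuspidalSlab e τ (4 * C₀), ‖y‖ ^ (-((n : ℝ) + 2 * s)) := fun A hA =>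
    setIntegral_norm_rpow_neg_le_of_subset_cuspidalSlab hg (by simp [e])
      (by rwa [finrank_euclideanSpace_fin]) (by rw [finrank_euclideanSpace_fin]; linarith [hs.1])
      (by rw [finrank_euclideanSpace_fin]; linarith [hs.2]) hτ.le (by positivity) hA
  rw [hslab]
  refine ⟨hbound _ fun z ⟨hz, hlo, hhi⟩ => ?_, hbound _ fun z ⟨hz, hlo, hhi⟩ => ?_⟩
  · exact mem_cuspidalSlab_of_taylor hC₀ hτ₀ hσ (by linarith) hlo hhi (hTaylor x hx z)
  · rw [← cuspidalSlab_neg]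
    refine mem_cuspidalSlab_of_taylor (δ := d x - d (x + z)) hC₀ hτ₀ hσ (by linarith)
      (by rw [inner_neg_left]; linarith) (by rw [inner_neg_left]; linarith) ?_
    rw [inner_neg_left, ← abs_neg]
    convert hTaylor x hx z using 2
    ring
end

section
/- Let s ∈ (1/2,1) and let φ : ℝ → (0,1) be a C² function satisfying, for some C₀ > 0: |φ̈(ξ)| ≤ C₀(1+|ξ|)^{-(2s+1)} for all ξ ∈ ℝ, and |φ(ξ) − H(ξ)| ≤ C₀|ξ|^{-2s} for |ξ| ≥ 1, where H is the Heaviside function. Then there is a constant C > 0 such that: (i) ∫_ℝ φ(ξ) ∫_ℝ |φ(ξ+w) + φ(ξ−w) − 2φ(ξ)| · |w|^{-(1+2s)} dw dξ ≤ C; and (ii) for every M > 1, ∫_ℝ φ(ξ) ∫_{{|w|>M}} |φ(ξ+w) + φ(ξ−w) − 2φ(ξ)| · |w|^{-(1+2s)} dw dξ ≤ C M^{-(2s-1)}. -/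
open MeasureTheory Real Set

/-! Write `Δ(ξ, w) = φ(ξ + w) + φ(ξ - w) - 2φ(ξ)`. For `|w| ≤ (1 + |ξ|)/2` the second derivative
is `O((1 + |ξ|)^{-(2s+1)})` on `[ξ - |w|, ξ + |w|]`, so `|Δ| = O(w² (1 + |ξ|)^{-(2s+1)})`; for all
`w`, `|Δ| ≤ 2` because `0 < φ < 1`. Integrating these bounds against `|w|^{-(1+2s)}` makes the inner
integral `O((1 + |ξ|)^{-2s})`, and over `{|w| > M}` also `O(M^{-2s})`, hence `O((M + |ξ|)^{-2s})`.
Since `2s > 1` these are integrable in `ξ`, and the substitution `ξ = M u` gives the factor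
`M^{1-2s}`. -/

section RadialIntegrals

lemma integrable_comp_abs_of_integrableOn_Ioi {F : ℝ → ℝ} (hF : IntegrableOn F (Ioi 0)) :
    Integrable fun x => F |x| := by
  have h_pos : IntegrableOn (fun x => F |x|) (Ioi 0) :=
    hF.congr_fun (fun x hx => by rw [abs_of_pos hx]) measurableSet_Ioi
  have h_neg : IntegrableOn (fun x => F |x|) (Iic 0) := by
    rw [← Measure.map_neg_eq_self (volume : Measure ℝ),
      (measurableEmbedding_neg (α := ℝ)).integrableOn_map_iff]
    simp_rw [Function.comp_def, abs_neg, neg_preimage, neg_Iic, neg_zero]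
    exact (integrableOn_Ici_iff_integrableOn_Ioi).2 h_pos
  rw [← integrableOn_univ, ← Iic_union_Ioi (a := 0)]
  exact h_neg.union h_pos

variable {F : ℝ → ℝ} {T : Set ℝ}

lemma indicator_abs_preimage (T : Set ℝ) (F : ℝ → ℝ) :
    (abs ⁻¹' T).indicator (fun x => F |x|) = fun x => T.indicator F |x| :=
  funext fun x => indicator_comp_right (s := T) (g := F) abs (x := x)

lemma integrableOn_abs_preimage (hT : MeasurableSet T) (hF : IntegrableOn F (Ioi 0 ∩ T)) :
    IntegrableOn (fun x => F |x|) (abs ⁻¹' T) := by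
  rw [← integrable_indicator_iff (measurable_abs hT), indicator_abs_preimage]
  refine integrable_comp_abs_of_integrableOn_Ioi ?_
  rwa [IntegrableOn, integrable_indicator_iff hT, IntegrableOn, Measure.restrict_restrict hT,
    inter_comm]

lemma setIntegral_abs_preimage (hT : MeasurableSet T) :
    ∫ x in abs ⁻¹' T, F |x| = 2 * ∫ x in Ioi 0 ∩ T, F x := by
  rw [← integral_indicator (measurable_abs hT), indicator_abs_preimage, integral_comp_abs,
    setIntegral_indicator hT]

lemma compl_setOf_abs_le (R : ℝ) : {w : ℝ | |w| ≤ R}ᶜ = {w | R < |w|} := by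
  ext; simp

variable {b R M : ℝ}

lemma integrableOn_abs_rpow_abs_le (hb : -1 < b) (hR : 0 < R) :
    IntegrableOn (fun x : ℝ => |x| ^ b) {x | |x| ≤ R} := by
  refine integrableOn_abs_preimage (F := fun x => x ^ b) (T := Iic R) measurableSet_Iic ?_
  rw [Ioi_inter_Iic, ← intervalIntegrable_iff_integrableOn_Ioc_of_le hR.le]
  exact intervalIntegral.intervalIntegrable_rpow' hb

lemma setIntegral_abs_rpow_abs_le (hb : -1 < b) (hR : 0 < R) :
    ∫ x in {x : ℝ | |x| ≤ R}, |x| ^ b = 2 * (R ^ (b + 1) / (b + 1)) := by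
  rw [show {x : ℝ | |x| ≤ R} = abs ⁻¹' Iic R from rfl,
    setIntegral_abs_preimage (F := fun x => x ^ b) measurableSet_Iic, Ioi_inter_Iic,
    ← intervalIntegral.integral_of_le hR.le, integral_rpow (Or.inl hb), zero_rpow (by linarith),
    sub_zero]

lemma integrableOn_abs_rpow_lt_abs (hb : b < -1) (hR : 0 < R) :
    IntegrableOn (fun x : ℝ => |x| ^ b) {x | R < |x|} := by
  refine integrableOn_abs_preimage (F := fun x => x ^ b) (T := Ioi R) measurableSet_Ioi ?_
  rw [Ioi_inter_Ioi, max_eq_right hR.le]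
  exact integrableOn_Ioi_rpow_of_lt hb hR

lemma setIntegral_abs_rpow_lt_abs (hb : b < -1) (hR : 0 < R) :
    ∫ x in {x : ℝ | R < |x|}, |x| ^ b = 2 * (-R ^ (b + 1) / (b + 1)) := by
  rw [show {x : ℝ | R < |x|} = abs ⁻¹' Ioi R from rfl,
    setIntegral_abs_preimage (F := fun x => x ^ b) measurableSet_Ioi, Ioi_inter_Ioi,
    max_eq_right hR.le, integral_Ioi_rpow_of_lt hb hR]

lemma add_abs_rpow_eq (hM : 0 < M) (p x : ℝ) :
    (M + |x|) ^ p = M ^ p * (1 + |M⁻¹ * x|) ^ p := by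
  rw [← mul_rpow hM.le (by positivity), abs_mul, abs_inv, abs_of_pos hM, mul_add,
    mul_inv_cancel_left₀ hM.ne', mul_one]

lemma integral_add_abs_rpow (hM : 0 < M) (p : ℝ) :
    ∫ x, (M + |x|) ^ p = M ^ (p + 1) * ∫ x, (1 + |x|) ^ p := by
  simp_rw [add_abs_rpow_eq hM p, integral_const_mul,
    Measure.integral_comp_mul_left (fun x => (1 + |x|) ^ p), inv_inv, abs_of_pos hM, smul_eq_mul,
    rpow_add_one hM.ne', mul_assoc]

lemma integrable_add_abs_rpow_neg (hM : 0 < M) {q : ℝ} (hq : 1 < q) :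
    Integrable fun x : ℝ => (M + |x|) ^ (-q) := by
  simp_rw [add_abs_rpow_eq hM]
  have := integrable_one_add_norm (E := ℝ) (μ := volume) (r := q) (by simpa using hq)
  simp only [Real.norm_eq_abs] at this
  exact (this.comp_mul_left' (inv_ne_zero hM.ne')).const_mul _

end RadialIntegrals

lemma integrableOn_of_nonneg_of_le {f g : ℝ → ℝ} {S : Set ℝ} (hS : MeasurableSet S)
    (hf : Measurable f) (hf₀ : ∀ x, 0 ≤ f x) (hg : IntegrableOn g S) (hfg : ∀ x ∈ S, f x ≤ g x) :
    IntegrableOn f S :=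
  hg.mono' hf.aestronglyMeasurable <| (ae_restrict_iff' hS).mpr <| ae_of_all _ fun x hx => by
    rw [Real.norm_of_nonneg (hf₀ x)]
    exact hfg x hx

lemma min_rpow_neg_le {M x q : ℝ} (hM : 0 < M) (hx : 0 ≤ x) (hq : 0 ≤ q) :
    min (M ^ (-q)) ((1 + x) ^ (-q)) ≤ 2 ^ q * (M + x) ^ (-q) := by
  rw [show 2 ^ q * (M + x) ^ (-q) = ((M + x) / 2) ^ (-q) by
    rw [div_rpow (by positivity) zero_le_two, rpow_neg zero_le_two, div_inv_eq_mul, mul_comm]]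
  rcases le_total M (1 + x) with h | h
  · exact (min_le_right _ _).trans
      (rpow_le_rpow_of_nonpos (by positivity) (by linarith) (by linarith))
  · exact (min_le_left _ _).trans
      (rpow_le_rpow_of_nonpos (by positivity) (by linarith) (by linarith))

lemma integral_mul_le_of_mem_Icc_of_le {α : Type*} [MeasurableSpace α] {μ : Measure α}
    {φ I G : α → ℝ} (hφ : ∀ x, φ x ∈ Icc (0 : ℝ) 1) (hI : ∀ x, 0 ≤ I x) (hIG : ∀ x, I x ≤ G x)
    (hG : Integrable G μ) : ∫ x, φ x * I x ∂μ ≤ ∫ x, G x ∂μ :=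
  integral_mono_of_nonneg (ae_of_all _ fun x => mul_nonneg (hφ x).1 (hI x)) hG
    (ae_of_all _ fun x => (mul_le_of_le_one_left (hI x) (hφ x).2).trans (hIG x))

lemma abs_second_difference_le {f : ℝ → ℝ} (hf : ContDiff ℝ 2 f) {B : ℝ} (x h : ℝ)
    (hB : ∀ y ∈ Icc (x - |h|) (x + |h|), |deriv (deriv f) y| ≤ B) :
    |f (x + h) + f (x - h) - 2 * f x| ≤ 2 * B * h ^ 2 := by
  have hf₁ : Differentiable ℝ f := hf.differentiable (by norm_num)
  have hf₂ : Differentiable ℝ (deriv f) :=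
    (contDiff_succ_iff_deriv.mp (hf : ContDiff ℝ (1 + 1) f)).2.2.differentiable one_ne_zero
  have hg : ∀ t, HasDerivAt (fun t => f (x + t) + f (x - t))
      (deriv f (x + t) - deriv f (x - t)) t := fun t => by
    simpa [← sub_eq_add_neg] using (((hf₁ _).hasDerivAt.comp_const_add x t).fun_add
      ((hf₁ _).hasDerivAt.comp_const_sub x t))
  have hg' : ∀ t ∈ Icc (-|h|) |h|, ‖deriv f (x + t) - deriv f (x - t)‖ ≤ 2 * B * |h| := by
    intro t ⟨ht₁, ht₂⟩
    have hB₀ : 0 ≤ B := (abs_nonneg _).trans (hB x ⟨by linarith, by linarith⟩)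
    have := (convex_Icc (x - |h|) (x + |h|)).norm_image_sub_le_of_norm_deriv_le
      (fun y _ => hf₂ y) hB (show x - t ∈ _ from ⟨by linarith, by linarith⟩)
      (show x + t ∈ _ from ⟨by linarith, by linarith⟩)
    rw [show x + t - (x - t) = 2 * t by ring, norm_mul, Real.norm_two] at this
    simp only [Real.norm_eq_abs] at this ⊢
    nlinarith [abs_le.mpr ⟨ht₁, ht₂⟩]
  have := (convex_Icc (-|h|) |h|).norm_image_sub_le_of_norm_hasDerivWithin_le
    (fun t _ => (hg t).hasDerivWithinAt) hg' ⟨by simp, abs_nonneg h⟩ ⟨neg_abs_le h, le_abs_self h⟩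
  simp only [add_zero, sub_zero, Real.norm_eq_abs] at this
  calc |f (x + h) + f (x - h) - 2 * f x| = |f (x + h) + f (x - h) - (f x + f x)| := by ring_nf
    _ ≤ 2 * B * |h| * |h| := this
    _ = 2 * B * h ^ 2 := by rw [mul_assoc, ← sq, sq_abs]

lemma div_abs_rpow_le_of_abs_le_mul_sq {u c w p : ℝ} (hc : 0 ≤ c) (h : |u| ≤ c * w ^ 2) :
    |u| / |w| ^ p ≤ c * |w| ^ (2 - p) := by
  rcases eq_or_ne w 0 with rfl | hw
  · have hu : |u| = 0 := le_antisymm (by simpa using h) (abs_nonneg u)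
    rw [hu, zero_div]
    positivity
  · have hw' : 0 < |w| := abs_pos.mpr hw
    rw [rpow_sub hw', rpow_two, sq_abs, mul_div_assoc']
    gcongr

section Kernel

noncomputable def secondDiffKernel (φ : ℝ → ℝ) (s ξ w : ℝ) : ℝ :=
  |φ (ξ + w) + φ (ξ - w) - 2 * φ ξ| / |w| ^ (1 + 2 * s)

variable {φ : ℝ → ℝ} {s C₀ : ℝ}

lemma secondDiffKernel_nonneg (ξ w : ℝ) : 0 ≤ secondDiffKernel φ s ξ w := by
  unfold secondDiffKernel; positivity

lemma measurable_secondDiffKernel (hφ : Measurable φ) (ξ : ℝ) :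
    Measurable (secondDiffKernel φ s ξ) := by
  unfold secondDiffKernel; fun_prop

lemma secondDiffKernel_le_of_mem_Icc (hφ : ∀ x, φ x ∈ Icc (0 : ℝ) 1) (ξ w : ℝ) :
    secondDiffKernel φ s ξ w ≤ 2 * |w| ^ (-(1 + 2 * s)) := by
  have h₁ := hφ (ξ + w); have h₂ := hφ (ξ - w); have h₃ := hφ ξ
  have : |φ (ξ + w) + φ (ξ - w) - 2 * φ ξ| ≤ 2 := abs_le.mpr ⟨by linarith [h₁.1, h₂.1, h₃.2],
    by linarith [h₁.2, h₂.2, h₃.1]⟩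
  rw [secondDiffKernel, rpow_neg (abs_nonneg w), div_eq_mul_inv]
  gcongr

lemma secondDiffKernel_le_of_deriv_deriv_le (hφ : ContDiff ℝ 2 φ) {B : ℝ} (ξ w : ℝ)
    (hB : ∀ y ∈ Icc (ξ - |w|) (ξ + |w|), |deriv (deriv φ) y| ≤ B) :
    secondDiffKernel φ s ξ w ≤ 2 * B * |w| ^ (1 - 2 * s) := by
  have hB₀ : 0 ≤ 2 * B := by
    linarith [abs_nonneg (deriv (deriv φ) ξ), hB ξ ⟨by simp, by simp⟩]
  have := div_abs_rpow_le_of_abs_le_mul_sq (p := 1 + 2 * s) hB₀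
    (abs_second_difference_le hφ ξ w hB)
  rwa [show 2 - (1 + 2 * s) = 1 - 2 * s by ring] at this

lemma integrableOn_secondDiffKernel_lt_abs (hs : 0 < s) (hφ₀₁ : ∀ x, φ x ∈ Icc (0 : ℝ) 1)
    (hφ : Measurable φ) (ξ : ℝ) {R : ℝ} (hR : 0 < R) :
    IntegrableOn (secondDiffKernel φ s ξ) {w | R < |w|} :=
  integrableOn_of_nonneg_of_le (measurableSet_lt measurable_const measurable_abs)
    (measurable_secondDiffKernel hφ ξ) (secondDiffKernel_nonneg ξ)
    ((integrableOn_abs_rpow_lt_abs (by linarith) hR).const_mul 2)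
    fun w _ => secondDiffKernel_le_of_mem_Icc hφ₀₁ ξ w

lemma setIntegral_secondDiffKernel_lt_abs_le (hs : 0 < s) (hφ₀₁ : ∀ x, φ x ∈ Icc (0 : ℝ) 1)
    (hφ : Measurable φ) (ξ : ℝ) {R : ℝ} (hR : 0 < R) :
    ∫ w in {w | R < |w|}, secondDiffKernel φ s ξ w ≤ 2 / s * R ^ (-(2 * s)) := by
  have hb : -(1 + 2 * s) < -1 := by linarith
  calc ∫ w in {w | R < |w|}, secondDiffKernel φ s ξ w
      ≤ ∫ w in {w | R < |w|}, 2 * |w| ^ (-(1 + 2 * s)) :=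
        setIntegral_mono_on (integrableOn_secondDiffKernel_lt_abs hs hφ₀₁ hφ ξ hR)
          ((integrableOn_abs_rpow_lt_abs hb hR).const_mul 2)
          (measurableSet_lt measurable_const measurable_abs)
          fun w _ => secondDiffKernel_le_of_mem_Icc hφ₀₁ ξ w
    _ = 2 / s * R ^ (-(2 * s)) := by
        rw [integral_const_mul, setIntegral_abs_rpow_lt_abs hb hR,
          show -(1 + 2 * s) + 1 = -(2 * s) by ring]
        field_simp

lemma abs_deriv_deriv_le_of_abs_sub_le {p : ℝ} (hC₀ : 0 ≤ C₀) (hp : 0 ≤ p)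
    (hdder : ∀ x, |deriv (deriv φ) x| ≤ C₀ / (1 + |x|) ^ p) {ξ y : ℝ}
    (hy : |y - ξ| ≤ (1 + |ξ|) / 2) :
    |deriv (deriv φ) y| ≤ C₀ / ((1 + |ξ|) / 2) ^ p := by
  refine (hdder y).trans (div_le_div_of_nonneg_left hC₀ (by positivity)
    (rpow_le_rpow (by positivity) ?_ hp))
  linarith [abs_sub_abs_le_abs_sub ξ y, abs_sub_comm y ξ]

lemma secondDiffKernel_le_of_abs_le (hs : 0 ≤ s) (hφ : ContDiff ℝ 2 φ) (hC₀ : 0 ≤ C₀)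
    (hdder : ∀ x, |deriv (deriv φ) x| ≤ C₀ / (1 + |x|) ^ (2 * s + 1)) {ξ w : ℝ}
    (hw : |w| ≤ (1 + |ξ|) / 2) :
    secondDiffKernel φ s ξ w ≤ 2 * (C₀ / ((1 + |ξ|) / 2) ^ (2 * s + 1)) * |w| ^ (1 - 2 * s) :=
  secondDiffKernel_le_of_deriv_deriv_le hφ ξ w fun y hy =>
    abs_deriv_deriv_le_of_abs_sub_le hC₀ (by linarith) hdder
      ((abs_sub_le_iff.mpr ⟨by linarith [hy.2], by linarith [hy.1]⟩).trans hw)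

lemma integrableOn_secondDiffKernel_abs_le (hs₀ : 0 ≤ s) (hs₁ : s < 1) (hφ : ContDiff ℝ 2 φ)
    (hC₀ : 0 ≤ C₀) (hdder : ∀ x, |deriv (deriv φ) x| ≤ C₀ / (1 + |x|) ^ (2 * s + 1)) (ξ : ℝ) :
    IntegrableOn (secondDiffKernel φ s ξ) {w | |w| ≤ (1 + |ξ|) / 2} :=
  integrableOn_of_nonneg_of_le (measurableSet_le measurable_abs measurable_const)
    (measurable_secondDiffKernel hφ.continuous.measurable ξ) (secondDiffKernel_nonneg ξ)
    ((integrableOn_abs_rpow_abs_le (by linarith) (by positivity)).const_mul _)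
    fun _ hw => secondDiffKernel_le_of_abs_le hs₀ hφ hC₀ hdder hw

lemma setIntegral_secondDiffKernel_abs_le_le (hs₀ : 0 ≤ s) (hs₁ : s < 1) (hφ : ContDiff ℝ 2 φ)
    (hC₀ : 0 ≤ C₀) (hdder : ∀ x, |deriv (deriv φ) x| ≤ C₀ / (1 + |x|) ^ (2 * s + 1)) (ξ : ℝ) :
    ∫ w in {w | |w| ≤ (1 + |ξ|) / 2}, secondDiffKernel φ s ξ w
      ≤ 4 * C₀ / (2 - 2 * s) * ((1 + |ξ|) / 2) ^ (1 - 4 * s) := by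
  have hR : 0 < (1 + |ξ|) / 2 := by positivity
  have hb : -1 < 1 - 2 * s := by linarith
  calc ∫ w in {w | |w| ≤ (1 + |ξ|) / 2}, secondDiffKernel φ s ξ w
      ≤ ∫ w in {w | |w| ≤ (1 + |ξ|) / 2},
          2 * (C₀ / ((1 + |ξ|) / 2) ^ (2 * s + 1)) * |w| ^ (1 - 2 * s) :=
        setIntegral_mono_on (integrableOn_secondDiffKernel_abs_le hs₀ hs₁ hφ hC₀ hdder ξ)
          ((integrableOn_abs_rpow_abs_le hb hR).const_mul _)
          (measurableSet_le measurable_abs measurable_const)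
          fun _ hw => secondDiffKernel_le_of_abs_le hs₀ hφ hC₀ hdder hw
    _ = 4 * C₀ / (2 - 2 * s) * ((1 + |ξ|) / 2) ^ (1 - 4 * s) := by
        rw [integral_const_mul, setIntegral_abs_rpow_abs_le hb hR,
          show 1 - 4 * s = (1 - 2 * s + 1) - (2 * s + 1) by ring, rpow_sub hR]
        ring

lemma integrable_secondDiffKernel (hs₀ : 0 < s) (hs₁ : s < 1) (hφ₀₁ : ∀ x, φ x ∈ Icc (0 : ℝ) 1)
    (hφ : ContDiff ℝ 2 φ) (hC₀ : 0 ≤ C₀)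
    (hdder : ∀ x, |deriv (deriv φ) x| ≤ C₀ / (1 + |x|) ^ (2 * s + 1)) (ξ : ℝ) :
    Integrable (secondDiffKernel φ s ξ) := by
  rw [← integrableOn_univ, ← union_compl_self {w | |w| ≤ (1 + |ξ|) / 2}, compl_setOf_abs_le]
  exact (integrableOn_secondDiffKernel_abs_le hs₀.le hs₁ hφ hC₀ hdder ξ).union
    (integrableOn_secondDiffKernel_lt_abs hs₀ hφ₀₁ hφ.continuous.measurable ξ (by positivity))

lemma exists_integral_secondDiffKernel_le (hs : s ∈ Ioo (1 / 2) 1)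
    (hφ₀₁ : ∀ x, φ x ∈ Icc (0 : ℝ) 1) (hφ : ContDiff ℝ 2 φ) (hC₀ : 0 ≤ C₀)
    (hdder : ∀ x, |deriv (deriv φ) x| ≤ C₀ / (1 + |x|) ^ (2 * s + 1)) :
    ∃ A, 0 < A ∧ ∀ ξ, ∫ w, secondDiffKernel φ s ξ w ≤ A * (1 + |ξ|) ^ (-(2 * s)) := by
  obtain ⟨hs₁, hs₂⟩ := hs
  have hs₀ : 0 < s := by linarith
  set c := 4 * C₀ / (2 - 2 * s)
  have hc : 0 ≤ c := div_nonneg (by positivity) (by linarith)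
  refine ⟨c / 2 ^ (1 - 4 * s) + 2 / s / 2 ^ (-(2 * s)), by positivity, fun ξ => ?_⟩
  have hρ : 1 ≤ 1 + |ξ| := by linarith [abs_nonneg ξ]
  rw [← integral_add_compl (measurableSet_le measurable_abs measurable_const)
    (integrable_secondDiffKernel hs₀ hs₂ hφ₀₁ hφ hC₀ hdder ξ), compl_setOf_abs_le]
  calc _ ≤ c * ((1 + |ξ|) / 2) ^ (1 - 4 * s) + 2 / s * ((1 + |ξ|) / 2) ^ (-(2 * s)) :=
        add_le_add (setIntegral_secondDiffKernel_abs_le_le hs₀.le hs₂ hφ hC₀ hdder ξ)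
          (setIntegral_secondDiffKernel_lt_abs_le hs₀ hφ₀₁ hφ.continuous.measurable ξ
            (by positivity))
    _ = c / 2 ^ (1 - 4 * s) * (1 + |ξ|) ^ (1 - 4 * s)
          + 2 / s / 2 ^ (-(2 * s)) * (1 + |ξ|) ^ (-(2 * s)) := by
        rw [div_rpow (by positivity) zero_le_two, div_rpow (by positivity) zero_le_two]
        ring
    _ ≤ (c / 2 ^ (1 - 4 * s) + 2 / s / 2 ^ (-(2 * s))) * (1 + |ξ|) ^ (-(2 * s)) := by
        rw [add_mul]
        gcongr
        linarith

lemma exists_setIntegral_secondDiffKernel_lt_abs_le (hs : s ∈ Ioo (1 / 2) 1)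
    (hφ₀₁ : ∀ x, φ x ∈ Icc (0 : ℝ) 1) (hφ : ContDiff ℝ 2 φ) (hC₀ : 0 ≤ C₀)
    (hdder : ∀ x, |deriv (deriv φ) x| ≤ C₀ / (1 + |x|) ^ (2 * s + 1)) :
    ∃ B, 0 < B ∧ ∀ ξ M, 0 < M →
      ∫ w in {w | M < |w|}, secondDiffKernel φ s ξ w ≤ B * (M + |ξ|) ^ (-(2 * s)) := by
  obtain ⟨A, hA, hinner⟩ := exists_integral_secondDiffKernel_le hs hφ₀₁ hφ hC₀ hdder
  have hs₀ : 0 < s := by linarith [hs.1]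
  refine ⟨max (2 / s) A * 2 ^ (2 * s), by positivity, fun ξ M hM => ?_⟩
  have hnear : ∫ w in {w | M < |w|}, secondDiffKernel φ s ξ w ≤ max (2 / s) A * M ^ (-(2 * s)) :=
    (setIntegral_secondDiffKernel_lt_abs_le hs₀ hφ₀₁ hφ.continuous.measurable ξ hM).trans
      (by gcongr; exact le_max_left _ _)
  have hfar : ∫ w in {w | M < |w|}, secondDiffKernel φ s ξ w
      ≤ max (2 / s) A * (1 + |ξ|) ^ (-(2 * s)) :=
    (setIntegral_le_integral (integrable_secondDiffKernel hs₀ hs.2 hφ₀₁ hφ hC₀ hdder ξ)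
      (ae_of_all _ (secondDiffKernel_nonneg ξ))).trans
      ((hinner ξ).trans (by gcongr; exact le_max_right _ _))
  calc _ ≤ max (2 / s) A * min (M ^ (-(2 * s))) ((1 + |ξ|) ^ (-(2 * s))) := by
        rw [mul_min_of_nonneg _ _ (by positivity)]
        exact le_min hnear hfar
    _ ≤ max (2 / s) A * (2 ^ (2 * s) * (M + |ξ|) ^ (-(2 * s))) := by
        gcongr
        exact min_rpow_neg_le hM (abs_nonneg ξ) (by positivity)
    _ = _ := by ring

end Kernel

theorem second_difference_estimates_general
    (s : ℝ) (hs : s ∈ Set.Ioo (1/2 : ℝ) 1)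
    (φ : ℝ → ℝ) (hφmem : ∀ ξ : ℝ, φ ξ ∈ Set.Ioo (0 : ℝ) 1) (hφreg : ContDiff ℝ 2 φ)
    (C₀ : ℝ) (hC₀ : 0 < C₀)
    (hdder : ∀ ξ : ℝ, |deriv (deriv φ) ξ| ≤ C₀ / (1 + |ξ|) ^ (2*s + 1)) :
    ∃ C : ℝ, 0 < C ∧
      (∫ ξ : ℝ, φ ξ * ∫ w : ℝ,
          |φ (ξ + w) + φ (ξ - w) - 2 * φ ξ| / |w| ^ (1 + 2*s)) ≤ C ∧
      (∀ M : ℝ, 1 < M →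
        (∫ ξ : ℝ, φ ξ * ∫ w in {w : ℝ | M < |w|},
            |φ (ξ + w) + φ (ξ - w) - 2 * φ ξ| / |w| ^ (1 + 2*s))
          ≤ C * M ^ (-(2*s - 1))) := by
  have hφ₀₁ : ∀ x, φ x ∈ Icc (0 : ℝ) 1 := fun x => Ioo_subset_Icc_self (hφmem x)
  obtain ⟨A, hA, hinner⟩ := exists_integral_secondDiffKernel_le hs hφ₀₁ hφreg hC₀.le hdder
  obtain ⟨B, hB, htail⟩ :=
    exists_setIntegral_secondDiffKernel_lt_abs_le hs hφ₀₁ hφreg hC₀.le hdder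
  have hq : 1 < 2 * s := by linarith [hs.1]
  set J := ∫ ξ : ℝ, (1 + |ξ|) ^ (-(2 * s))
  have hJ : 0 < J := integral_pos_of_integrable_nonneg_nonzero (x := 0)
    ((continuous_const.add continuous_abs).rpow_const fun x =>
      Or.inl (by positivity : (0 : ℝ) < 1 + |x|).ne')
    (integrable_add_abs_rpow_neg one_pos hq) (fun x => by positivity) (by positivity)
  refine ⟨max A B * J, by positivity, ?_, fun M hM => ?_⟩
  · calc _ ≤ ∫ ξ, A * (1 + |ξ|) ^ (-(2 * s)) :=
          integral_mul_le_of_mem_Icc_of_le hφ₀₁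
            (fun ξ => integral_nonneg (secondDiffKernel_nonneg ξ)) hinner
            ((integrable_add_abs_rpow_neg one_pos hq).const_mul A)
      _ ≤ max A B * J := by rw [integral_const_mul]; gcongr; exact le_max_left _ _
  · calc _ ≤ ∫ ξ, B * (M + |ξ|) ^ (-(2 * s)) :=
          integral_mul_le_of_mem_Icc_of_le hφ₀₁
            (fun ξ => integral_nonneg (secondDiffKernel_nonneg ξ))
            (fun ξ => htail ξ M (by linarith))
            ((integrable_add_abs_rpow_neg (by linarith) hq).const_mul B)
      _ = B * J * M ^ (-(2 * s - 1)) := by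
          rw [integral_const_mul, integral_add_abs_rpow (by linarith),
            show -(2 * s) + 1 = -(2 * s - 1) by ring]
          ring
      _ ≤ max A B * J * M ^ (-(2 * s - 1)) := by gcongr; exact le_max_right _ _

/-- **Second-difference estimates for the phase transition (s ∈ (1/2,1)).** If
`φ : ℝ → (0,1)` is C² with `|φ̈(ξ)| ≤ C₀(1+|ξ|)^{-(2s+1)}` for all `ξ` and
`|φ(ξ) − H(ξ)| ≤ C₀|ξ|^{-2s}` for `|ξ| ≥ 1`, then there is `C > 0` such that
(i) `∫_ℝ φ(ξ) ∫_ℝ |φ(ξ+w)+φ(ξ−w)−2φ(ξ)|·|w|^{-(1+2s)} dw dξ ≤ C`, and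
(ii) for every `M > 1`,
`∫_ℝ φ(ξ) ∫_{|w|>M} |φ(ξ+w)+φ(ξ−w)−2φ(ξ)|·|w|^{-(1+2s)} dw dξ ≤ C M^{-(2s-1)}`. -/
theorem second_difference_estimates
    (s : ℝ) (hs : s ∈ Set.Ioo (1/2 : ℝ) 1)
    (φ : ℝ → ℝ) (hφmem : ∀ ξ : ℝ, φ ξ ∈ Set.Ioo (0 : ℝ) 1) (hφreg : ContDiff ℝ 2 φ)
    (C₀ : ℝ) (hC₀ : 0 < C₀)
    (hdder : ∀ ξ : ℝ, |deriv (deriv φ) ξ| ≤ C₀ / (1 + |ξ|) ^ (2*s + 1))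
    (hasym : ∀ ξ : ℝ, 1 ≤ |ξ| →
      |φ ξ - (if ξ < 0 then (0:ℝ) else 1)| ≤ C₀ / |ξ| ^ (2*s)) :
    ∃ C : ℝ, 0 < C ∧
      (∫ ξ : ℝ, φ ξ * ∫ w : ℝ,
          |φ (ξ + w) + φ (ξ - w) - 2 * φ ξ| / |w| ^ (1 + 2*s)) ≤ C ∧
      (∀ M : ℝ, 1 < M →
        (∫ ξ : ℝ, φ ξ * ∫ w in {w : ℝ | M < |w|},
            |φ (ξ + w) + φ (ξ - w) - 2 * φ ξ| / |w| ^ (1 + 2*s))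
          ≤ C * M ^ (-(2*s - 1))) :=
  second_difference_estimates_general s hs φ hφmem hφreg C₀ hC₀ hdder
end
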